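/- Let σ be a policy, s ∈ S a state, and f1, f2 parameterizations of a tree template 𝒫, where f1 evaluates the unprimed variables and f2 evaluates the primed variables. Then (f1, f2) satisfies the disjunction φ^act_{s,σ(s)} ∨ φ'^act_{s,σ(s)} if and only if σ(s) ∈ {σ_{𝒫(f1)}(s), σ_{𝒫(f2)}(s)}. -/

import Mathlib

namespace Paper9

/-- A decision tree for an MDP whose states are valuations of the variables in `Var`:
leaves carry actions from `A`, inner nodes carry a state predicate `v ≤ b`
(a variable `v : Var` together with an integer bound `b`); the left subtree
corresponds to states satisfying the predicate, the right subtree to the others. -/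
inductive DT (Var A : Type) : Type
  | leaf (a : A)
  | node (v : Var) (b : ℤ) (l r : DT Var A)

variable {Var A : Type}

/-- Evaluation of a decision tree on a state (valuation): follow the predicates
from the root to a leaf and return the leaf's action. -/
def DT.eval : DT Var A → (Var → ℤ) → A
  | .leaf a, _ => a
  | .node v b l r, s => if s v ≤ b then l.eval s else r.eval s

/-- Depth of a decision tree. -/
def DT.depth : DT Var A → ℕ
  | .leaf _ => 0
  | .node _ _ l r => max l.depth r.depth + 1

/-- `t.IsLeafAt π` holds iff the path `π` (list of booleans; `true` = go left)
leads from the root of `t` to a leaf. -/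
def DT.IsLeafAt : DT Var A → List Bool → Prop
  | .leaf _, [] => True
  | .node _ _ l _, true :: p => l.IsLeafAt p
  | .node _ _ _ r, false :: p => r.IsLeafAt p
  | _, _ => False

/-- The set of states (within the state space `X`) corresponding to the node of the
tree reached by path `π`: the root corresponds to all of `X`, the left child of a node
to the states of the node satisfying its predicate, and the right child to those
not satisfying it.  Invalid paths correspond to `∅`. -/
def DT.statesAt : DT Var A → Set (Var → ℤ) → List Bool → Set (Var → ℤ)
  | _, X, [] => X
  | .node v b l _, X, true :: p => l.statesAt {s ∈ X | s v ≤ b} p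
  | .node v b _ r, X, false :: p => r.statesAt {s ∈ X | ¬ s v ≤ b} p
  | .leaf _, _, _ :: _ => ∅

open Classical in
/-- The policy induced by a decision tree: play the action of the leaf the state is
routed to if it is available (`Av s` is the set of available actions in state `s`),
and otherwise fall back to the random action `astar`. -/
noncomputable def inducedPolicy (Av : (Var → ℤ) → Set A) (astar : A)
    (t : DT Var A) (s : Var → ℤ) : A :=
  if t.eval s ∈ Av s then t.eval s else astar

/-- The skeleton (topology) of a binary tree: the underlying tree `T` of a tree
template, forgetting all labels. -/
inductive Skel : Type
  | leaf
  | node (l r : Skel)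

/-- `sk.IsInnerAt π` holds iff the path `π` (`true` = left) leads from the root
to an inner node of the skeleton. -/
def Skel.IsInnerAt : Skel → List Bool → Prop
  | .node _ _, [] => True
  | .node l _, true :: p => l.IsInnerAt p
  | .node _ r, false :: p => r.IsInnerAt p
  | _, _ => False

/-- `sk.IsLeafAt π` holds iff the path `π` leads from the root to a leaf
of the skeleton. -/
def Skel.IsLeafAt : Skel → List Bool → Prop
  | .leaf, [] => True
  | .node l _, true :: p => l.IsLeafAt p
  | .node _ r, false :: p => r.IsLeafAt p
  | _, _ => False

/-- A parameterization `f = (δ̂, β, α̂)` of a tree template: a variable-selection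
function, a bound-selection function (on inner nodes, addressed by root-to-node
paths) and an action-selection function (on leaves). -/
structure Param (Var A : Type) where
  dvar : List Bool → Var
  bound : List Bool → ℤ
  act : List Bool → A

/-- The decision tree `𝒫(f)` instantiated from the skeleton by the
parameterization `f`: the inner node at address `p` carries the predicate
`v_{δ̂(p)} ≤ β(p)`, the leaf at address `p` carries the action `α̂(p)`. -/
def Skel.build : Skel → Param Var A → List Bool → DT Var A
  | .leaf, f, p => .leaf (f.act p)
  | .node l r, f, p =>
      .node (f.dvar p) (f.bound p) (l.build f (p ++ [true])) (r.build f (p ++ [false]))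

/-- A rectangular set of parameterizations `F`: for each inner node a set of allowed
variables and a set of allowed bounds, and for each leaf a set of allowed actions. -/
structure FamSet (Var A : Type) where
  dvarS : List Bool → Set Var
  boundS : List Bool → Set ℤ
  actS : List Bool → Set A

/-- `f ∈ F`: the parameterization `f` belongs to the rectangular set `F`
(equivalently, `f` satisfies the formula `dom(F)`). -/
def memF (sk : Skel) (F : FamSet Var A) (f : Param Var A) : Prop :=
  (∀ p, sk.IsInnerAt p → f.dvar p ∈ F.dvarS p ∧ f.bound p ∈ F.boundS p) ∧
  (∀ p, sk.IsLeafAt p → f.act p ∈ F.actS p)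

/-- For a root-to-node path, the list of (proper prefix, direction taken) pairs:
the inner nodes visited along the path together with the direction in which
the path continues. -/
def pathSteps : List Bool → List (List Bool × Bool)
  | [] => []
  | d :: p => ([], d) :: (pathSteps p).map fun q => (d :: q.1, q.2)

/-- The relation `▷` used in the selection formula: `≤` when the path goes left,
`>` when it goes right. -/
def dirRel : Bool → ℤ → ℤ → Prop
  | true, x, b => x ≤ b
  | false, x, b => x > b

/-- The selection formula `φ^sel_{s,n}` (with the parameterization `f` substituted
for the variables `δ̂_n, β_n`): state `s` is routed along the path `n`, i.e. at every
inner node on the path the value of the selected variable satisfies the required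
inequality. -/
def phiSel (f : Param Var A) (s : Var → ℤ) (n : List Bool) : Prop :=
  ∀ q ∈ pathSteps n, dirRel q.2 (s (f.dvar q.1)) (f.bound q.1)

/-- The action-choice formula `φ^act_{s,a,n}` (with `f` substituted): the leaf `n`
selects action `a`; for the random action `a = α*` the leaf may also select any
action unavailable in `s`. -/
def phiActAt (Av : (Var → ℤ) → Set A) (astar : A) (f : Param Var A)
    (s : Var → ℤ) (a : A) (n : List Bool) : Prop :=
  (a = astar ∧ (f.act n = astar ∨ f.act n ∉ Av s)) ∨ (a ≠ astar ∧ f.act n = a)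

/-- The action-choice formula `φ^act_{s,a}` (with `f` substituted): every leaf to
which `s` is routed selects action `a` in the sense of `φ^act_{s,a,n}`. -/
def phiAct (sk : Skel) (Av : (Var → ℤ) → Set A) (astar : A) (f : Param Var A)
    (s : Var → ℤ) (a : A) : Prop :=
  ∀ n, sk.IsLeafAt n → phiSel f s n → phiActAt Av astar f s a n

/-- A leaf carrying action `b` encodes action `a` at state `s` in the sense of `φ^act_{s,a,n}`. -/
def LeafEncodes (Av : (Var → ℤ) → Set A) (astar : A) (s : Var → ℤ) (a b : A) : Prop :=
  (a = astar ∧ (b = astar ∨ b ∉ Av s)) ∨ (a ≠ astar ∧ b = a)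

open Classical in
theorem leafEncodes_iff {Av : (Var → ℤ) → Set A} {astar : A} {s : Var → ℤ} {a : A}
    (ha : a ∈ Av s) (b : A) :
    LeafEncodes Av astar s a b ↔ a = if b ∈ Av s then b else astar := by
  unfold LeafEncodes
  split_ifs with hb
  · by_cases hstar : a = astar
    · subst hstar; simp [hb, eq_comm]
    · simp [hstar, eq_comm]
  · constructor
    · rintro (⟨rfl, -⟩ | ⟨-, rfl⟩)
      · rfl
      · exact absurd ha hb
    · exact fun h => Or.inl ⟨h, Or.inr hb⟩

/-- The parameterization of the subtemplate rooted at address `p`. -/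
def Param.shift (f : Param Var A) (p : List Bool) : Param Var A :=
  ⟨fun q => f.dvar (p ++ q), fun q => f.bound (p ++ q), fun q => f.act (p ++ q)⟩

theorem Param.shift_shift (f : Param Var A) (p q : List Bool) :
    (f.shift p).shift q = f.shift (p ++ q) := by
  simp [Param.shift]

theorem Skel.build_eq_build_shift (sk : Skel) (f : Param Var A) (p : List Bool) :
    sk.build f p = sk.build (f.shift p) [] := by
  induction sk generalizing f p with
  | leaf => simp [Skel.build, Param.shift]
  | node l r ihl ihr =>
    simp only [Skel.build, List.nil_append]
    rw [ihl f, ihl (f.shift p), ihr f, ihr (f.shift p), Param.shift_shift, Param.shift_shift]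
    simp [Param.shift]

theorem phiSel_nil (f : Param Var A) (s : Var → ℤ) : phiSel f s [] := by
  simp [phiSel, pathSteps]

theorem phiSel_cons (f : Param Var A) (s : Var → ℤ) (d : Bool) (n : List Bool) :
    phiSel f s (d :: n) ↔
      dirRel d (s (f.dvar [])) (f.bound []) ∧ phiSel (f.shift [d]) s n := by
  simp only [phiSel, pathSteps, List.forall_mem_cons, List.forall_mem_map]
  rfl

theorem phiAct_leaf (Av : (Var → ℤ) → Set A) (astar : A) (f : Param Var A)
    (s : Var → ℤ) (a : A) :
    phiAct .leaf Av astar f s a ↔ LeafEncodes Av astar s a (f.act []) := by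
  refine ⟨fun h => h [] trivial (phiSel_nil f s), fun h n hn _ => ?_⟩
  match n, hn with
  | [], _ => exact h

theorem phiAct_node (l r : Skel) (Av : (Var → ℤ) → Set A) (astar : A) (f : Param Var A)
    (s : Var → ℤ) (a : A) :
    phiAct (.node l r) Av astar f s a ↔
      (s (f.dvar []) ≤ f.bound [] → phiAct l Av astar (f.shift [true]) s a) ∧
      (¬ s (f.dvar []) ≤ f.bound [] → phiAct r Av astar (f.shift [false]) s a) := by
  constructor
  · intro h
    refine ⟨fun hle n hn hsel => h (true :: n) hn ((phiSel_cons f s _ n).2 ⟨hle, hsel⟩),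
      fun hgt n hn hsel => h (false :: n) hn ((phiSel_cons f s _ n).2 ⟨lt_of_not_ge hgt, hsel⟩)⟩
  · rintro ⟨hl, hr⟩ n hn hsel
    match n, hn with
    | true :: n, hn =>
      obtain ⟨hle, hsel⟩ := (phiSel_cons f s _ n).1 hsel
      exact hl hle n hn hsel
    | false :: n, hn =>
      obtain ⟨hgt, hsel⟩ := (phiSel_cons f s _ n).1 hsel
      exact hr (not_le.2 hgt) n hn hsel

/-- Since `s` satisfies `φ^sel_{s,n}` exactly at the leaf `n` it is routed to,
`φ^act_{s,a}` is a condition on the action the tree evaluates to. -/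
theorem phiAct_iff_leafEncodes_eval (sk : Skel) (Av : (Var → ℤ) → Set A) (astar : A)
    (f : Param Var A) (s : Var → ℤ) (a : A) :
    phiAct sk Av astar f s a ↔ LeafEncodes Av astar s a ((sk.build f []).eval s) := by
  induction sk generalizing f with
  | leaf => exact phiAct_leaf Av astar f s a
  | node l r ihl ihr =>
    rw [phiAct_node, ihl, ihr]
    simp only [Skel.build, DT.eval, List.nil_append]
    rw [l.build_eq_build_shift f, r.build_eq_build_shift f]
    by_cases h : s (f.dvar []) ≤ f.bound [] <;> simp [h]

theorem phiAct_iff_eq_inducedPolicy (sk : Skel) (Av : (Var → ℤ) → Set A) (astar : A)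
    (f : Param Var A) (s : Var → ℤ) {a : A} (ha : a ∈ Av s) :
    phiAct sk Av astar f s a ↔ a = inducedPolicy Av astar (sk.build f []) s :=
  (phiAct_iff_leafEncodes_eval sk Av astar f s a).trans (leafEncodes_iff ha _)

theorem phiAct_or_iff_general {Var A : Type}
    (S : Set (Var → ℤ)) (Av : (Var → ℤ) → Set A) (astar : A)
    (sk : Skel) (f₁ f₂ : Param Var A) (σ : (Var → ℤ) → A)
    (hσ : ∀ s ∈ S, σ s ∈ Av s) (s : Var → ℤ) (hs : s ∈ S) :
    (phiAct sk Av astar f₁ s (σ s) ∨ phiAct sk Av astar f₂ s (σ s)) ↔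
      (σ s = inducedPolicy Av astar (sk.build f₁ []) s ∨
       σ s = inducedPolicy Av astar (sk.build f₂ []) s) := by
  rw [phiAct_iff_eq_inducedPolicy sk Av astar f₁ s (hσ s hs),
    phiAct_iff_eq_inducedPolicy sk Av astar f₂ s (hσ s hs)]

/-- Let `σ` be a policy, `s` a state, and `f₁, f₂` parameterizations
(`f₁` evaluating the unprimed and `f₂` the primed parameters).  Then `(f₁, f₂)`
satisfies the disjunction `φ^act_{s,σ(s)} ∨ φ'^act_{s,σ(s)}` iff
`σ(s) ∈ {σ_{𝒫(f₁)}(s), σ_{𝒫(f₂)}(s)}`. -/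
theorem phiAct_or_iff {Var A : Type}
    (S : Set (Var → ℤ)) (Av : (Var → ℤ) → Set A) (astar : A)
    (hstar : ∀ s, astar ∈ Av s)
    (sk : Skel) (f₁ f₂ : Param Var A) (σ : (Var → ℤ) → A)
    (hσ : ∀ s ∈ S, σ s ∈ Av s) (s : Var → ℤ) (hs : s ∈ S) :
    (phiAct sk Av astar f₁ s (σ s) ∨ phiAct sk Av astar f₂ s (σ s)) ↔
      (σ s = inducedPolicy Av astar (sk.build f₁ []) s ∨
       σ s = inducedPolicy Av astar (sk.build f₂ []) s) :=
  phiAct_or_iff_general S Av astar sk f₁ f₂ σ hσ s hs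

end Paper9
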